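/- arXiv:2502.04096 — 4 statements merged into one kernel-verified Lean document; each statement's English description precedes it below -/
import Mathlib

section
/- For bounded linear operators T₁, T₂ on a complex Hilbert space H and q in the closed unit disc, the q-numerical radius of the 2×2 off-diagonal block operator matrix [[0, T₁],[T₂, 0]] on H ⊕ H equals that of [[0, T₂],[T₁, 0]]. -/
noncomputable def qNumRadius {H : Type*} [NormedAddCommGroup H] [InnerProductSpace ℂ H]
    (q : ℂ) (T : H →L[ℂ] H) : ℝ :=
  sSup {r : ℝ | ∃ x y : H, ‖x‖ = 1 ∧ ‖y‖ = 1 ∧ (inner ℂ x y : ℂ) = q ∧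
    r = ‖(inner ℂ (T x) y : ℂ)‖}


noncomputable def blockOp {H : Type*} [NormedAddCommGroup H] [InnerProductSpace ℂ H]
    (A B C D : H →L[ℂ] H) : WithLp 2 (H × H) →L[ℂ] WithLp 2 (H × H) :=
  (WithLp.prodContinuousLinearEquiv 2 ℂ H H).symm.toContinuousLinearMap.comp
    ((((A.comp (ContinuousLinearMap.fst ℂ H H) + B.comp (ContinuousLinearMap.snd ℂ H H)).prod
       (C.comp (ContinuousLinearMap.fst ℂ H H) + D.comp (ContinuousLinearMap.snd ℂ H H)))).comp
      (WithLp.prodContinuousLinearEquiv 2 ℂ H H).toContinuousLinearMap)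

theorem qNumRadius_conj_linearIsometryEquiv {E F : Type*} [NormedAddCommGroup E]
    [InnerProductSpace ℂ E] [NormedAddCommGroup F] [InnerProductSpace ℂ F]
    (q : ℂ) (U : E ≃ₗᵢ[ℂ] F) (T : E →L[ℂ] E) :
    qNumRadius q ((U : E →L[ℂ] F) ∘L T ∘L (U.symm : F →L[ℂ] E)) = qNumRadius q T := by
  unfold qNumRadius
  congr 1
  ext r
  constructor
  · rintro ⟨x, y, hx, hy, hxy, rfl⟩
    refine ⟨U.symm x, U.symm y, by simpa using hx, by simpa using hy, by simpa using hxy, ?_⟩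
    simp [← U.inner_map_map]
  · rintro ⟨x, y, hx, hy, hxy, rfl⟩
    exact ⟨U x, U y, by simpa using hx, by simpa using hy, by simpa using hxy, by simp⟩

theorem withLpProdComm_conj_blockOp {H : Type*} [NormedAddCommGroup H] [InnerProductSpace ℂ H]
    (A B C D : H →L[ℂ] H) :
    let S := LinearIsometryEquiv.withLpProdComm 2 ℂ H H
    (S : WithLp 2 (H × H) →L[ℂ] WithLp 2 (H × H)) ∘L blockOp A B C D ∘L
      (S.symm : WithLp 2 (H × H) →L[ℂ] WithLp 2 (H × H)) = blockOp D C B A := by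
  ext x
  simp [blockOp, add_comm]

theorem stmt5_general {H : Type*} [NormedAddCommGroup H] [InnerProductSpace ℂ H]
    (T₁ T₂ : H →L[ℂ] H) (q : ℂ) :
    qNumRadius q (blockOp 0 T₁ T₂ 0) = qNumRadius q (blockOp 0 T₂ T₁ 0) := by
  rw [← withLpProdComm_conj_blockOp 0 T₁ T₂ 0, qNumRadius_conj_linearIsometryEquiv]

theorem stmt5 {H : Type*} [NormedAddCommGroup H] [InnerProductSpace ℂ H] [CompleteSpace H]
    (T₁ T₂ : H →L[ℂ] H) (q : ℂ) (hq : ‖q‖ ≤ 1) :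
    qNumRadius q (blockOp 0 T₁ T₂ 0) = qNumRadius q (blockOp 0 T₂ T₁ 0) :=
  stmt5_general T₁ T₂ q
end

section
/- For bounded linear operators T₁, T₂ on a complex Hilbert space H, any θ ∈ ℝ, and q in the closed unit disc, w_q of the block operator [[0, T₁],[e^{iθ}T₂, 0]] on H ⊕ H equals w_q of [[0, T₁],[T₂, 0]]. -/
section blockOp

variable {H : Type*} [NormedAddCommGroup H] [InnerProductSpace ℂ H]

@[simp]
lemma blockOp_apply_fst (A B C D : H →L[ℂ] H) (x : WithLp 2 (H × H)) :
    (blockOp A B C D x).fst = A x.fst + B x.snd := rfl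

@[simp]
lemma blockOp_apply_snd (A B C D : H →L[ℂ] H) (x : WithLp 2 (H × H)) :
    (blockOp A B C D x).snd = C x.fst + D x.snd := rfl

lemma smul_blockOp (c : ℂ) (A B C D : H →L[ℂ] H) :
    c • blockOp A B C D = blockOp (c • A) (c • B) (c • C) (c • D) := by
  ext x : 1
  refine (WithLp.ext_iff _).2 (Prod.ext ?_ ?_) <;> simp [smul_add]

noncomputable def rotateSnd (u : Circle) : WithLp 2 (H × H) ≃ₗᵢ[ℂ] WithLp 2 (H × H) :=
  LinearIsometryEquiv.withLpProdCongr 2 (LinearIsometryEquiv.refl ℂ H)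
    { LinearEquiv.smulOfNeZero ℂ H u (Circle.coe_ne_zero u) with
      norm_map' := fun x => by simp [norm_smul, Circle.norm_coe] }

lemma blockOp_rotateSnd (u : Circle) (A B C D : H →L[ℂ] H) (x : WithLp 2 (H × H)) :
    blockOp A B C D (rotateSnd u x) =
      rotateSnd u (blockOp A ((u : ℂ) • B) ((u : ℂ)⁻¹ • C) D x) := by
  refine (WithLp.ext_iff _).2 (Prod.ext ?_ ?_)
  · simp [rotateSnd]
  · simp [rotateSnd, smul_add, smul_smul, Circle.coe_ne_zero]

end blockOp

section qNumRadius

variable {E : Type*} [NormedAddCommGroup E] [InnerProductSpace ℂ E]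

lemma qNumRadius_eq_of_intertwine (U : E ≃ₗᵢ[ℂ] E) {S T : E →L[ℂ] E}
    (h : ∀ x, T (U x) = U (S x)) (q : ℂ) : qNumRadius q T = qNumRadius q S := by
  unfold qNumRadius
  congr 1
  ext r
  constructor
  · rintro ⟨x, y, hx, hy, hxy, rfl⟩
    refine ⟨U.symm x, U.symm y, by simpa, by simpa, by rwa [U.symm.inner_map_map], ?_⟩
    rw [← U.inner_map_map (S _), ← h, U.apply_symm_apply, U.apply_symm_apply]
  · rintro ⟨x, y, hx, hy, hxy, rfl⟩
    exact ⟨U x, U y, by simpa, by simpa, by rwa [U.inner_map_map], by rw [h, U.inner_map_map]⟩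

lemma qNumRadius_smul (q c : ℂ) (T : E →L[ℂ] E) :
    qNumRadius q (c • T) = ‖c‖ * qNumRadius q T := by
  unfold qNumRadius
  rw [← smul_eq_mul, ← Real.sSup_smul_of_nonneg (norm_nonneg c)]
  congr 1
  ext r
  simp only [Set.mem_smul_set, Set.mem_ofPred_eq, smul_apply, inner_smul_left,
    norm_mul, Complex.norm_conj, smul_eq_mul]
  constructor
  · rintro ⟨x, y, hx, hy, hxy, rfl⟩
    exact ⟨_, ⟨x, y, hx, hy, hxy, rfl⟩, rfl⟩
  · rintro ⟨_, ⟨x, y, hx, hy, hxy, rfl⟩, rfl⟩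
    exact ⟨x, y, hx, hy, hxy, rfl⟩

end qNumRadius

theorem stmt6_general {H : Type*} [NormedAddCommGroup H] [InnerProductSpace ℂ H]
    (T₁ T₂ : H →L[ℂ] H) (θ : ℝ) (q : ℂ) :
    qNumRadius q (blockOp 0 T₁ (Complex.exp (θ * Complex.I) • T₂) 0)
      = qNumRadius q (blockOp 0 T₁ T₂ 0) := by
  set u := Circle.exp (θ / 2)
  have hu : Complex.exp (θ * Complex.I) = u * u := by
    rw [← Circle.coe_exp, ← Circle.coe_mul, ← Circle.exp_add, add_halves]
  have hconj : ∀ x, blockOp 0 T₁ (Complex.exp (θ * Complex.I) • T₂) 0 (rotateSnd u x)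
      = rotateSnd u (((u : ℂ) • blockOp 0 T₁ T₂ 0) x) := by
    intro x
    rw [blockOp_rotateSnd, smul_smul, hu, inv_mul_cancel_left₀ (Circle.coe_ne_zero u),
      smul_blockOp, smul_zero]
  rw [qNumRadius_eq_of_intertwine (rotateSnd u) hconj, qNumRadius_smul, Circle.norm_coe, one_mul]

theorem stmt6 {H : Type*} [NormedAddCommGroup H] [InnerProductSpace ℂ H] [CompleteSpace H]
    (T₁ T₂ : H →L[ℂ] H) (θ : ℝ) (q : ℂ) (hq : ‖q‖ ≤ 1) :
    qNumRadius q (blockOp 0 T₁ (Complex.exp (θ * Complex.I) • T₂) 0)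
      = qNumRadius q (blockOp 0 T₁ T₂ 0) :=
  stmt6_general T₁ T₂ θ q
end

section
/- Let T be a bounded linear operator on a complex Hilbert space with T² = 0 and let q ∈ [0,1). Then w_q(T) ≤ √(1 - 3q²/4 + q√(1-q²)) · ‖T‖. -/
/-!
Split `x = u + w` orthogonally with `u` on the line through `T x`. Since `T² = 0` we get
`T u = 0`, and `⟪T x, w⟫ = 0`, so `⟪T x, x⟫ = ⟪T w, u⟫`, whence
`|⟪T x, x⟫| ≤ ‖T‖ ‖w‖ ‖u‖ ≤ ‖T‖ ‖x‖² / 2`. For unit vectors with `⟪x, y⟫ = q`, split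
`y = q x + z` with `‖z‖ = √(1 - q²)`; then `|⟪T x, y⟫| ≤ (q / 2 + √(1 - q²)) ‖T‖`, and
`q / 2 + √(1 - q²)` is exactly the square root in the statement.
-/

open scoped InnerProductSpace

namespace ContinuousLinearMap

variable {𝕜 E : Type*} [RCLike 𝕜] [NormedAddCommGroup E] [InnerProductSpace 𝕜 E]

theorem norm_inner_apply_self_le_of_sq_eq_zero {T : E →L[𝕜] E} (hT : T ^ 2 = 0) (x : E) :
    ‖⟪T x, x⟫_𝕜‖ ≤ ‖T‖ * ‖x‖ ^ 2 / 2 := by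
  set K := 𝕜 ∙ T x
  set u := K.starProjection x
  set w := Kᗮ.starProjection x
  have hTu : T u = 0 := by
    obtain ⟨c, hc⟩ := Submodule.mem_span_singleton.1 (K.starProjection_apply_mem x)
    rw [show u = c • T x from hc.symm, map_smul, ← mul_apply_eq_comp, ← sq, hT, zero_apply,
      smul_zero]
  have hx : x = u + w := (K.starProjection_add_starProjection_orthogonal x).symm
  have hTw : T w = T x := by rw [hx, map_add, hTu, zero_add]
  have hTxw : ⟪T x, w⟫_𝕜 = 0 :=
    Submodule.inner_right_of_mem_orthogonal (Submodule.mem_span_singleton_self _)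
      (Kᗮ.starProjection_apply_mem x)
  have hTxx : ⟪T x, x⟫_𝕜 = ⟪T w, u⟫_𝕜 := by
    rw [hTw, ← add_zero ⟪T x, u⟫_𝕜, ← hTxw, ← inner_add_right, ← hx]
  have hpyth : ‖x‖ ^ 2 = ‖u‖ ^ 2 + ‖w‖ ^ 2 := K.norm_sq_eq_add_norm_sq_starProjection x
  calc ‖⟪T x, x⟫_𝕜‖ = ‖⟪T w, u⟫_𝕜‖ := by rw [hTxx]
    _ ≤ ‖T‖ * ‖w‖ * ‖u‖ := by
      grw [norm_inner_le_norm, T.le_opNorm]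
    _ ≤ ‖T‖ * ‖x‖ ^ 2 / 2 := by
      rw [hpyth]
      nlinarith [mul_nonneg (norm_nonneg T) (sq_nonneg (‖u‖ - ‖w‖))]

theorem norm_inner_apply_le_of_sq_eq_zero {T : E →L[𝕜] E} (hT : T ^ 2 = 0) {x y : E}
    (hx : ‖x‖ = 1) (hy : ‖y‖ = 1) :
    ‖⟪T x, y⟫_𝕜‖ ≤ (‖⟪x, y⟫_𝕜‖ / 2 + √(1 - ‖⟪x, y⟫_𝕜‖ ^ 2)) * ‖T‖ := by
  set K := 𝕜 ∙ x
  set z := Kᗮ.starProjection y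
  have hPy : K.starProjection y = ⟪x, y⟫_𝕜 • x :=
    Submodule.starProjection_unit_singleton 𝕜 hx y
  have hz : ‖z‖ = √(1 - ‖⟪x, y⟫_𝕜‖ ^ 2) := by
    have hpyth := K.norm_sq_eq_add_norm_sq_starProjection y
    rw [hPy, norm_smul, hx, hy, mul_one] at hpyth
    rw [← Real.sqrt_sq (norm_nonneg z)]
    congr 1
    linarith
  have hy' : y = ⟪x, y⟫_𝕜 • x + z := by
    rw [← hPy, K.starProjection_add_starProjection_orthogonal]
  have hTx : ‖T x‖ ≤ ‖T‖ := by simpa [hx] using T.le_opNorm x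
  calc ‖⟪T x, y⟫_𝕜‖ = ‖⟪x, y⟫_𝕜 * ⟪T x, x⟫_𝕜 + ⟪T x, z⟫_𝕜‖ := by
        conv_lhs => rw [hy']
        rw [inner_add_right, inner_smul_right]
    _ ≤ ‖⟪x, y⟫_𝕜‖ * ‖⟪T x, x⟫_𝕜‖ + ‖T x‖ * ‖z‖ := by
        grw [norm_add_le, norm_mul, norm_inner_le_norm (T x) z]
    _ ≤ ‖⟪x, y⟫_𝕜‖ * (‖T‖ * ‖x‖ ^ 2 / 2) + ‖T‖ * ‖z‖ := by
        grw [norm_inner_apply_self_le_of_sq_eq_zero hT x, hTx]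
    _ = (‖⟪x, y⟫_𝕜‖ / 2 + √(1 - ‖⟪x, y⟫_𝕜‖ ^ 2)) * ‖T‖ := by
        rw [hx, hz]
        ring

end ContinuousLinearMap

theorem Real.sqrt_one_sub_three_mul_sq_div_four_add_mul_sqrt {q : ℝ} (hq0 : 0 ≤ q)
    (hq1 : q ^ 2 ≤ 1) :
    √(1 - 3 * q ^ 2 / 4 + q * √(1 - q ^ 2)) = q / 2 + √(1 - q ^ 2) := by
  have hs : √(1 - q ^ 2) ^ 2 = 1 - q ^ 2 := Real.sq_sqrt (by linarith)
  rw [Real.sqrt_eq_iff_mul_self_eq_of_pos] <;> nlinarith [Real.sqrt_nonneg (1 - q ^ 2)]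

theorem stmt14_general {H : Type*} [NormedAddCommGroup H] [InnerProductSpace ℂ H]
    (T : H →L[ℂ] H) (hT : T ^ 2 = 0) (q : ℝ) (hq0 : 0 ≤ q) (hq1 : q < 1) :
    qNumRadius (q : ℂ) T
      ≤ Real.sqrt (1 - 3 * q ^ 2 / 4 + q * Real.sqrt (1 - q ^ 2)) * ‖T‖ := by
  rw [Real.sqrt_one_sub_three_mul_sq_div_four_add_mul_sqrt hq0 (by nlinarith)]
  refine Real.sSup_le ?_ (by positivity)
  rintro _ ⟨x, y, hx, hy, hxy, rfl⟩
  simpa [hxy, abs_of_nonneg hq0] using T.norm_inner_apply_le_of_sq_eq_zero hT hx hy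

theorem stmt14 {H : Type*} [NormedAddCommGroup H] [InnerProductSpace ℂ H] [CompleteSpace H]
    (T : H →L[ℂ] H) (hT : T ^ 2 = 0) (q : ℝ) (hq0 : 0 ≤ q) (hq1 : q < 1) :
    qNumRadius (q : ℂ) T
      ≤ Real.sqrt (1 - 3 * q ^ 2 / 4 + q * Real.sqrt (1 - q ^ 2)) * ‖T‖ :=
  stmt14_general T hT q hq0 hq1
end

section
/- Let T₂, T₃ be bounded linear operators on a complex Hilbert space H and q ∈ (0,1]. Then w_q([[0,T₂],[T₃,0]]) ≥ max{w_q(T₂), w_q(T₃)} − √(1 - 3q²/4 + q√(1-q²)) · min{‖T₂+T₃‖, ‖T₂-T₃‖}. -/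
/-
Since the constant in front of the minimum is at least `1/2`, it suffices to show
`max (w_q T₂) (w_q T₃) ≤ w_q [[0,T₂],[T₃,0]] + min ‖T₂ + T₃‖ ‖T₂ - T₃‖ / 2`.
If `‖x‖ = ‖y‖ = 1` and `⟪x, y⟫ = q`, then `(x, ωx)/√2` and `(y, ωy)/√2` (for `|ω| = 1`) are unit
vectors of `H ⊕ H` with inner product `q`, on which the block operator takes the value
`(ω̄⟪T₂x, y⟫ + ω⟪T₃x, y⟫)/2`. Taking `ω = 1` and `ω = i` bounds both `|⟪T₂x, y⟫ ± ⟪T₃x, y⟫|` by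
`2 w_q [[0,T₂],[T₃,0]]`, while they are also bounded by `‖T₂ ± T₃‖`, and
`max |a| |b| ≤ (|a + b| + |a - b|)/2`.
-/

open ComplexConjugate
open scoped InnerProductSpace

lemma max_norm_le_norm_add_add_norm_sub_div_two {E : Type*} [SeminormedAddCommGroup E]
    [NormedSpace ℝ E] (a b : E) : max ‖a‖ ‖b‖ ≤ (‖a + b‖ + ‖a - b‖) / 2 := by
  have h2a : ‖(2 : ℝ) • a‖ ≤ ‖a + b‖ + ‖a - b‖ := by
    rw [show (2 : ℝ) • a = (a + b) + (a - b) by module]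
    exact norm_add_le _ _
  have h2b : ‖(2 : ℝ) • b‖ ≤ ‖a + b‖ + ‖a - b‖ := by
    rw [show (2 : ℝ) • b = (a + b) - (a - b) by module]
    exact norm_sub_le _ _
  rw [norm_smul, Real.norm_two] at h2a h2b
  exact max_le (by linarith) (by linarith)

section BlockOp

variable {H : Type*} [NormedAddCommGroup H] [InnerProductSpace ℂ H]

lemma norm_inner_apply_le_opNorm (T : H →L[ℂ] H) {x y : H} (hx : ‖x‖ = 1) (hy : ‖y‖ = 1) :
    ‖⟪T x, y⟫_ℂ‖ ≤ ‖T‖ :=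
  calc ‖⟪T x, y⟫_ℂ‖ ≤ ‖T x‖ * ‖y‖ := norm_inner_le_norm _ _
    _ ≤ ‖T‖ * ‖x‖ * ‖y‖ := by gcongr; exact T.le_opNorm x
    _ = ‖T‖ := by rw [hx, hy, mul_one, mul_one]

lemma qNumRadius_nonneg (q : ℂ) (T : H →L[ℂ] H) : 0 ≤ qNumRadius q T :=
  Real.sSup_nonneg fun _ ⟨_, _, _, _, _, hr⟩ ↦ hr ▸ norm_nonneg _

lemma norm_inner_le_qNumRadius {q : ℂ} (T : H →L[ℂ] H) {x y : H} (hx : ‖x‖ = 1) (hy : ‖y‖ = 1)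
    (hxy : ⟪x, y⟫_ℂ = q) : ‖⟪T x, y⟫_ℂ‖ ≤ qNumRadius q T := by
  refine le_csSup ⟨‖T‖, ?_⟩ ⟨x, y, hx, hy, hxy, rfl⟩
  rintro r ⟨x, y, hx, hy, -, rfl⟩
  exact norm_inner_apply_le_opNorm T hx hy

lemma qNumRadius_le {q : ℂ} {T : H →L[ℂ] H} {c : ℝ} (hc : 0 ≤ c)
    (h : ∀ x y : H, ‖x‖ = 1 → ‖y‖ = 1 → ⟪x, y⟫_ℂ = q → ‖⟪T x, y⟫_ℂ‖ ≤ c) :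
    qNumRadius q T ≤ c :=
  Real.sSup_le (fun _ ⟨x, y, hx, hy, hxy, hr⟩ ↦ hr ▸ h x y hx hy hxy) hc

lemma inner_blockOp_toLp (A B C D : H →L[ℂ] H) (x₁ x₂ y₁ y₂ : H) :
    ⟪blockOp A B C D (WithLp.toLp 2 (x₁, x₂)), WithLp.toLp 2 (y₁, y₂)⟫_ℂ
      = ⟪A x₁ + B x₂, y₁⟫_ℂ + ⟪C x₁ + D x₂, y₂⟫_ℂ := by
  simp [blockOp, WithLp.prod_inner_apply, inner_add_left]

lemma norm_toLp_smul_smul {α β : ℂ} (hαβ : ‖α‖ ^ 2 + ‖β‖ ^ 2 = 1) {x : H} (hx : ‖x‖ = 1) :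
    ‖WithLp.toLp 2 (α • x, β • x)‖ = 1 := by
  rw [← pow_eq_one_iff_of_nonneg (norm_nonneg _) two_ne_zero, WithLp.prod_norm_sq_eq_of_L2]
  simpa [norm_smul, hx] using hαβ

lemma inner_toLp_smul_smul {α β : ℂ} (hαβ : ‖α‖ ^ 2 + ‖β‖ ^ 2 = 1) (x y : H) :
    ⟪WithLp.toLp 2 (α • x, β • x), WithLp.toLp 2 (α • y, β • y)⟫_ℂ = ⟪x, y⟫_ℂ := by
  have h : conj α * α + conj β * β = 1 := by
    rw [Complex.conj_mul', Complex.conj_mul']; exact_mod_cast hαβ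
  simp only [WithLp.prod_inner_apply, inner_smul_left, inner_smul_right]
  linear_combination ⟪x, y⟫_ℂ * h

lemma norm_conj_mul_inner_add_le_qNumRadius_blockOp (T₂ T₃ : H →L[ℂ] H) {q : ℂ} {α β : ℂ}
    (hαβ : ‖α‖ ^ 2 + ‖β‖ ^ 2 = 1) {x y : H} (hx : ‖x‖ = 1) (hy : ‖y‖ = 1) (hxy : ⟪x, y⟫_ℂ = q) :
    ‖conj β * α * ⟪T₂ x, y⟫_ℂ + conj α * β * ⟪T₃ x, y⟫_ℂ‖ ≤ qNumRadius q (blockOp 0 T₂ T₃ 0) := by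
  have h := norm_inner_le_qNumRadius (blockOp 0 T₂ T₃ 0) (norm_toLp_smul_smul hαβ hx)
    (norm_toLp_smul_smul hαβ hy) ((inner_toLp_smul_smul hαβ x y).trans hxy)
  convert h using 2
  simp only [inner_blockOp_toLp, zero_apply, map_smul, smul_zero, zero_add,
    add_zero, inner_smul_left, inner_smul_right]
  ring

lemma norm_conj_mul_inner_add_mul_inner_le_two_mul_qNumRadius_blockOp (T₂ T₃ : H →L[ℂ] H)
    {q ω : ℂ} (hω : ‖ω‖ = 1) {x y : H} (hx : ‖x‖ = 1) (hy : ‖y‖ = 1) (hxy : ⟪x, y⟫_ℂ = q) :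
    ‖conj ω * ⟪T₂ x, y⟫_ℂ + ω * ⟪T₃ x, y⟫_ℂ‖ ≤ 2 * qNumRadius q (blockOp 0 T₂ T₃ 0) := by
  set a : ℂ := Complex.ofReal (√2)⁻¹
  have ha : ‖a‖ ^ 2 = 1 / 2 := by
    rw [Complex.norm_real, Real.norm_eq_abs, sq_abs, inv_pow, Real.sq_sqrt zero_le_two, one_div]
  have ha' : conj a * a = 1 / 2 := by
    rw [Complex.conj_mul', ← Complex.ofReal_pow, ha]
    norm_num
  have h := norm_conj_mul_inner_add_le_qNumRadius_blockOp T₂ T₃ (α := a) (β := ω * a)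
    (by rw [norm_mul, hω, one_mul, ha]; norm_num) hx hy hxy
  rw [show conj (ω * a) * a * ⟪T₂ x, y⟫_ℂ + conj a * (ω * a) * ⟪T₃ x, y⟫_ℂ
      = 1 / 2 * (conj ω * ⟪T₂ x, y⟫_ℂ + ω * ⟪T₃ x, y⟫_ℂ) by
    rw [map_mul]; linear_combination (conj ω * ⟪T₂ x, y⟫_ℂ + ω * ⟪T₃ x, y⟫_ℂ) * ha',
    norm_mul] at h
  norm_num at h
  linarith

lemma qNumRadius_le_qNumRadius_blockOp_add (T₂ T₃ : H →L[ℂ] H) (q : ℂ) :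
    max (qNumRadius q T₂) (qNumRadius q T₃)
      ≤ qNumRadius q (blockOp 0 T₂ T₃ 0) + min ‖T₂ + T₃‖ ‖T₂ - T₃‖ / 2 := by
  have hbound : ∀ x y : H, ‖x‖ = 1 → ‖y‖ = 1 → ⟪x, y⟫_ℂ = q →
      max ‖⟪T₂ x, y⟫_ℂ‖ ‖⟪T₃ x, y⟫_ℂ‖
        ≤ qNumRadius q (blockOp 0 T₂ T₃ 0) + min ‖T₂ + T₃‖ ‖T₂ - T₃‖ / 2 := by
    intro x y hx hy hxy
    have hsum : ‖⟪T₂ x, y⟫_ℂ + ⟪T₃ x, y⟫_ℂ‖ ≤ 2 * qNumRadius q (blockOp 0 T₂ T₃ 0) := by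
      simpa using norm_conj_mul_inner_add_mul_inner_le_two_mul_qNumRadius_blockOp T₂ T₃
        norm_one hx hy hxy
    have hdiff : ‖⟪T₂ x, y⟫_ℂ - ⟪T₃ x, y⟫_ℂ‖ ≤ 2 * qNumRadius q (blockOp 0 T₂ T₃ 0) := by
      have h := norm_conj_mul_inner_add_mul_inner_le_two_mul_qNumRadius_blockOp T₂ T₃
        Complex.norm_I hx hy hxy
      rwa [Complex.conj_I, show ∀ s t : ℂ, -Complex.I * s + Complex.I * t = -Complex.I * (s - t)
        from fun _ _ ↦ by ring, norm_mul, norm_neg, Complex.norm_I, one_mul] at h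
    have hsum' : ‖⟪T₂ x, y⟫_ℂ + ⟪T₃ x, y⟫_ℂ‖ ≤ ‖T₂ + T₃‖ := by
      simpa only [add_apply, inner_add_left]
        using norm_inner_apply_le_opNorm (T₂ + T₃) hx hy
    have hdiff' : ‖⟪T₂ x, y⟫_ℂ - ⟪T₃ x, y⟫_ℂ‖ ≤ ‖T₂ - T₃‖ := by
      simpa only [sub_apply, inner_sub_left]
        using norm_inner_apply_le_opNorm (T₂ - T₃) hx hy
    refine (max_norm_le_norm_add_add_norm_sub_div_two _ _).trans ?_
    rcases min_cases ‖T₂ + T₃‖ ‖T₂ - T₃‖ with ⟨h, -⟩ | ⟨h, -⟩ <;> rw [h] <;> linarith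
  have hnonneg : 0 ≤ qNumRadius q (blockOp 0 T₂ T₃ 0) + min ‖T₂ + T₃‖ ‖T₂ - T₃‖ / 2 := by
    have := qNumRadius_nonneg q (blockOp 0 T₂ T₃ 0)
    positivity
  exact max_le
    (qNumRadius_le hnonneg fun x y hx hy hxy ↦ (le_max_left _ _).trans (hbound x y hx hy hxy))
    (qNumRadius_le hnonneg fun x y hx hy hxy ↦ (le_max_right _ _).trans (hbound x y hx hy hxy))

end BlockOp

theorem stmt16_general {H : Type*} [NormedAddCommGroup H] [InnerProductSpace ℂ H]
    (T₂ T₃ : H →L[ℂ] H) (q : ℝ) (hq0 : 0 < q) (hq1 : q ≤ 1) :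
    qNumRadius (q : ℂ) (blockOp 0 T₂ T₃ 0)
      ≥ max (qNumRadius (q : ℂ) T₂) (qNumRadius (q : ℂ) T₃) -
        Real.sqrt (1 - 3 * q ^ 2 / 4 + q * Real.sqrt (1 - q ^ 2)) *
          min ‖T₂ + T₃‖ ‖T₂ - T₃‖ := by
  have hc : 1 / 2 ≤ Real.sqrt (1 - 3 * q ^ 2 / 4 + q * Real.sqrt (1 - q ^ 2)) :=
    (Real.le_sqrt' one_half_pos).2 <| by
      nlinarith [mul_nonneg hq0.le (Real.sqrt_nonneg (1 - q ^ 2))]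
  have hmin : 0 ≤ min ‖T₂ + T₃‖ ‖T₂ - T₃‖ := le_min (norm_nonneg _) (norm_nonneg _)
  have := qNumRadius_le_qNumRadius_blockOp_add T₂ T₃ (q : ℂ)
  nlinarith [mul_le_mul_of_nonneg_right hc hmin]

theorem stmt16 {H : Type*} [NormedAddCommGroup H] [InnerProductSpace ℂ H] [CompleteSpace H]
    (T₂ T₃ : H →L[ℂ] H) (q : ℝ) (hq0 : 0 < q) (hq1 : q ≤ 1) :
    qNumRadius (q : ℂ) (blockOp 0 T₂ T₃ 0)
      ≥ max (qNumRadius (q : ℂ) T₂) (qNumRadius (q : ℂ) T₃) -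
        Real.sqrt (1 - 3 * q ^ 2 / 4 + q * Real.sqrt (1 - q ^ 2)) *
          min ‖T₂ + T₃‖ ‖T₂ - T₃‖ :=
  stmt16_general T₂ T₃ q hq0 hq1
end
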